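/- Deterministic excess-risk bound for objective perturbation (strongly convex case): Let C ⊆ ℝ^p be a convex set, N a norm on ℝ^p, Δ > 0, and let L : ℝ^p → ℝ be Δ-strongly convex with respect to N on C. Let b ∈ ℝ^p, suppose θ^priv ∈ C attains the minimum over C of θ ↦ L(θ) + ⟨b, θ⟩, and θ* ∈ C attains the minimum of L over C. Then N(θ^priv − θ*) ≤ 2·N*(b)/Δ and L(θ^priv) − L(θ*) ≤ 2·N*(b)²/Δ. -/

import Mathlib

/-! Comparing with the midpoint, a minimiser `x` of a `Δ`-strongly convex `f` on a convex `C`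
grows quadratically: `f x + Δ / 4 * N (x - y) ^ 2 ≤ f y` for `y ∈ C`. Apply this to `L` at `θ*`
and to `L + ⟪b, ·⟫` (still `Δ`-strongly convex) at `θpriv`, and add: with `n = N (θpriv - θ*)`,
`Δ / 2 * n ^ 2 ≤ ⟪b, θ* - θpriv⟫ ≤ N*(b) * n`, whence `n ≤ 2 N*(b) / Δ`. The excess risk is then
at most `⟪b, θ* - θpriv⟫ ≤ N*(b) * n ≤ 2 N*(b) ^ 2 / Δ`. -/

open RealInnerProductSpace

/-- The dual norm `N*(g) = sup { ⟨g, v⟩ : N(v) ≤ 1 }` of a norm `N` on `ℝ^p`. -/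
noncomputable def dualNorm {p : ℕ} (N : EuclideanSpace ℝ (Fin p) → ℝ)
    (g : EuclideanSpace ℝ (Fin p)) : ℝ :=
  sSup {r : ℝ | ∃ v : EuclideanSpace ℝ (Fin p), N v ≤ 1 ∧ r = ⟪g, v⟫}

/-- `N` is a norm on `ℝ^p`. -/
def IsNorm {p : ℕ} (N : EuclideanSpace ℝ (Fin p) → ℝ) : Prop :=
  (∀ x y, N (x + y) ≤ N x + N y) ∧ (∀ (c : ℝ) (x : EuclideanSpace ℝ (Fin p)),
    N (c • x) = |c| * N x) ∧ (∀ x, N x = 0 ↔ x = 0)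

def StronglyConvexWrt {E : Type*} [AddCommGroup E] [Module ℝ E] (N : E → ℝ) (Δ : ℝ)
    (C : Set E) (f : E → ℝ) : Prop :=
  ∀ x ∈ C, ∀ y ∈ C, ∀ α ∈ Set.Icc (0:ℝ) 1,
    f (α • x + (1 - α) • y) ≤ α * f x + (1 - α) * f y - Δ * α * (1 - α) / 2 * (N (x - y)) ^ 2

namespace StronglyConvexWrt

variable {E : Type*} [AddCommGroup E] [Module ℝ E] {N : E → ℝ} {Δ : ℝ} {C : Set E}
  {f : E → ℝ}

theorem add_linearMap (hf : StronglyConvexWrt N Δ C f) (g : E →ₗ[ℝ] ℝ) :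
    StronglyConvexWrt N Δ C (fun x => f x + g x) := by
  intro x hx y hy α hα
  have := hf x hx y hy α hα
  simp only [map_add, map_smul, smul_eq_mul]
  linarith

theorem add_sq_le_of_isMinOn (hf : StronglyConvexWrt N Δ C f) (hC : Convex ℝ C) {x y : E}
    (hx : x ∈ C) (hmin : IsMinOn f C x) (hy : y ∈ C) :
    f x + Δ / 4 * N (x - y) ^ 2 ≤ f y := by
  have hmid := hf x hx y hy (1 / 2) ⟨by norm_num, by norm_num⟩
  have hle := isMinOn_iff.mp hmin _
    (hC hx hy (a := 1 / 2) (b := 1 - 1 / 2) (by norm_num) (by norm_num) (by norm_num))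
  linarith

end StronglyConvexWrt

namespace IsNorm

variable {p : ℕ} {N : EuclideanSpace ℝ (Fin p) → ℝ}

theorem map_zero (hN : IsNorm N) : N 0 = 0 := (hN.2.2 0).mpr rfl

theorem map_sub_rev (hN : IsNorm N) (x y : EuclideanSpace ℝ (Fin p)) :
    N (x - y) = N (y - x) := by
  simpa [neg_sub] using hN.2.1 (-1) (y - x)

theorem nonneg (hN : IsNorm N) (x : EuclideanSpace ℝ (Fin p)) : 0 ≤ N x := by
  have h := hN.1 x (-x)
  have hneg : N (-x) = N x := by simpa using hN.2.1 (-1) x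
  rw [add_neg_cancel, hN.map_zero, hneg] at h
  linarith

theorem convexOn (hN : IsNorm N) : ConvexOn ℝ Set.univ N := by
  refine ⟨convex_univ, fun x _ y _ a b ha hb _ => ?_⟩
  calc N (a • x + b • y) ≤ N (a • x) + N (b • y) := hN.1 _ _
    _ = a • N x + b • N y := by rw [hN.2.1, hN.2.1, abs_of_nonneg ha, abs_of_nonneg hb]; rfl

theorem continuous (hN : IsNorm N) : Continuous N :=
  continuousOn_univ.mp (hN.convexOn.continuousOn isOpen_univ)

/-- `N`, being convex, is continuous; it is positive on the compact Euclidean unit sphere, hence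
bounded below there by a positive constant. -/
theorem exists_pos_mul_norm_le (hN : IsNorm N) :
    ∃ c > 0, ∀ v, c * ‖v‖ ≤ N v := by
  have hpos : ∀ u ∈ Metric.sphere (0 : EuclideanSpace ℝ (Fin p)) 1, 0 < N u := fun u hu =>
    (hN.nonneg u).lt_of_ne fun h =>
      ne_zero_of_mem_unit_sphere ⟨u, hu⟩ ((hN.2.2 u).mp h.symm)
  obtain ⟨c, hc, hcN⟩ :=
    (isCompact_sphere 0 1).exists_forall_le' hN.continuous.continuousOn hpos
  refine ⟨c, hc, fun v => ?_⟩
  rcases eq_or_ne v 0 with rfl | hv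
  · simp [hN.map_zero]
  have hnorm : 0 < ‖v‖ := norm_pos_iff.mpr hv
  have hu := hcN (‖v‖⁻¹ • v) (by simp [norm_smul, hnorm.ne'])
  rw [hN.2.1, abs_of_pos (inv_pos.mpr hnorm), inv_mul_eq_div, le_div_iff₀ hnorm] at hu
  exact hu

/-- Without this the `sSup` defining `dualNorm` would be the junk value `0`. -/
theorem bddAbove_inner (hN : IsNorm N) (b : EuclideanSpace ℝ (Fin p)) :
    BddAbove {r : ℝ | ∃ v : EuclideanSpace ℝ (Fin p), N v ≤ 1 ∧ r = ⟪b, v⟫} := by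
  obtain ⟨c, hc, hcN⟩ := hN.exists_pos_mul_norm_le
  refine ⟨‖b‖ / c, ?_⟩
  rintro _ ⟨v, hv, rfl⟩
  have hv' : ‖v‖ ≤ 1 / c := by rw [le_div_iff₀ hc]; linarith [hcN v]
  calc ⟪b, v⟫ ≤ ‖b‖ * ‖v‖ := real_inner_le_norm b v
    _ ≤ ‖b‖ * (1 / c) := by gcongr
    _ = ‖b‖ / c := by ring

theorem dualNorm_nonneg (hN : IsNorm N) (b : EuclideanSpace ℝ (Fin p)) :
    0 ≤ dualNorm N b :=
  le_csSup (hN.bddAbove_inner b) ⟨0, by simp [hN.map_zero]⟩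

theorem inner_le_dualNorm_mul (hN : IsNorm N) (b v : EuclideanSpace ℝ (Fin p)) :
    ⟪b, v⟫ ≤ dualNorm N b * N v := by
  rcases (hN.nonneg v).eq_or_lt with h | h
  · simp [(hN.2.2 v).mp h.symm, hN.map_zero]
  have hunit : ⟪b, (N v)⁻¹ • v⟫ ≤ dualNorm N b :=
    le_csSup (hN.bddAbove_inner b)
      ⟨_, by rw [hN.2.1, abs_of_pos (inv_pos.mpr h), inv_mul_cancel₀ h.ne'], rfl⟩
  rw [real_inner_smul_right, inv_mul_eq_div, div_le_iff₀ h] at hunit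
  exact hunit

end IsNorm

/-- Deterministic excess-risk bound for objective perturbation (strongly convex case). -/
theorem objective_perturbation_strongly_convex {p : ℕ}
    (C : Set (EuclideanSpace ℝ (Fin p))) (hC : Convex ℝ C)
    (N : EuclideanSpace ℝ (Fin p) → ℝ) (hN : IsNorm N)
    (Δ : ℝ) (hΔ : 0 < Δ)
    (L : EuclideanSpace ℝ (Fin p) → ℝ)
    (hLsc : ∀ x ∈ C, ∀ y ∈ C, ∀ α ∈ Set.Icc (0:ℝ) 1,
      L (α • x + (1 - α) • y) ≤
        α * L x + (1 - α) * L y - Δ * α * (1 - α) / 2 * (N (x - y)) ^ 2)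
    (b : EuclideanSpace ℝ (Fin p))
    (θpriv : EuclideanSpace ℝ (Fin p)) (hθpriv : θpriv ∈ C)
    (hminpriv : ∀ θ ∈ C, L θpriv + ⟪b, θpriv⟫ ≤ L θ + ⟪b, θ⟫)
    (θs : EuclideanSpace ℝ (Fin p)) (hθs : θs ∈ C)
    (hminL : ∀ θ ∈ C, L θs ≤ L θ) :
    N (θpriv - θs) ≤ 2 * dualNorm N b / Δ ∧
      L θpriv - L θs ≤ 2 * (dualNorm N b) ^ 2 / Δ := by
  have hL : StronglyConvexWrt N Δ C L := hLsc
  set D := dualNorm N b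
  set n := N (θpriv - θs)
  have hgrowthL : L θs + Δ / 4 * n ^ 2 ≤ L θpriv := by
    simpa only [hN.map_sub_rev θs θpriv] using
      hL.add_sq_le_of_isMinOn hC hθs (isMinOn_iff.mpr hminL) hθpriv
  have hgrowthPriv : L θpriv + ⟪b, θpriv⟫ + Δ / 4 * n ^ 2 ≤ L θs + ⟪b, θs⟫ :=
    (hL.add_linearMap (innerₛₗ ℝ b)).add_sq_le_of_isMinOn hC hθpriv
      (isMinOn_iff.mpr hminpriv) hθs
  have hinner : ⟪b, θs⟫ - ⟪b, θpriv⟫ ≤ D * n := by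
    simpa only [inner_sub_right, hN.map_sub_rev θs θpriv] using
      hN.inner_le_dualNorm_mul b (θs - θpriv)
  have hD : 0 ≤ D := hN.dualNorm_nonneg b
  have hkey : Δ / 2 * n ^ 2 ≤ D * n := by linarith
  have hdist : n ≤ 2 * D / Δ := by
    rw [le_div_iff₀ hΔ]
    nlinarith [hN.nonneg (θpriv - θs)]
  refine ⟨hdist, ?_⟩
  calc L θpriv - L θs ≤ D * n := by linarith [hminpriv θs hθs]
    _ ≤ D * (2 * D / Δ) := by gcongr
    _ = 2 * D ^ 2 / Δ := by ring
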